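/- arXiv:2405.03233 — 6 statements merged into one kernel-verified Lean document; each statement's English description precedes it below -/
import Mathlib

section
/- Let σ ∈ (0,2) and let b⁺ = σa + (1−σ)b for vectors a, b, b⁺ ∈ ℝⁿ. Then (1/σ)‖b⁺‖² ≤ σ₁‖a‖² + σ₂(‖b‖² − ‖b⁺‖²), where σ₁ = σ/(1−|1−σ|)² and σ₂ = |1−σ|/(σ(1−|1−σ|)). -/
theorem stmt_1 (n : ℕ) (σ : ℝ) (hσ0 : 0 < σ) (hσ2 : σ < 2)
    (a b bp : EuclideanSpace ℝ (Fin n)) (hbp : bp = σ • a + (1 - σ) • b) :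
    (1/σ) * ‖bp‖^2 ≤
      (σ / (1 - |1 - σ|)^2) * ‖a‖^2 +
        (|1 - σ| / (σ * (1 - |1 - σ|))) * (‖b‖^2 - ‖bp‖^2) := by
  set t := |1 - σ| with ht
  have ht0 : 0 ≤ t := abs_nonneg _
  have ht1 : t < 1 := by rw [ht, abs_lt]; constructor <;> linarith
  have hP : ‖bp‖ ≤ σ * ‖a‖ + t * ‖b‖ := by
    calc ‖bp‖ ≤ ‖σ • a‖ + ‖(1 - σ) • b‖ := by rw [hbp]; exact norm_add_le _ _
    _ = σ * ‖a‖ + t * ‖b‖ := by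
        rw [norm_smul, norm_smul, Real.norm_eq_abs, Real.norm_eq_abs,
          abs_of_pos hσ0, ht]
  have hA : (0:ℝ) ≤ ‖a‖ := norm_nonneg _
  have hB : (0:ℝ) ≤ ‖b‖ := norm_nonneg _
  have hPn : (0:ℝ) ≤ ‖bp‖ := norm_nonneg _
  have h1t : (0:ℝ) < 1 - t := by linarith
  have key : (1 - t) * ‖bp‖^2 ≤ σ^2 * ‖a‖^2 + t * (1 - t) * ‖b‖^2 := by
    nlinarith [mul_nonneg ht0 (sq_nonneg (σ * ‖a‖ - (1 - t) * ‖b‖)),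
      mul_le_mul hP hP hPn (by positivity)]
  rw [div_mul_eq_mul_div, div_mul_eq_mul_div, div_mul_eq_mul_div,
    div_add_div _ _ (by positivity) (by positivity),
    div_le_div_iff₀ (by positivity) (by positivity)]
  nlinarith [mul_le_mul_of_nonneg_left key (mul_pos hσ0 h1t).le,
    mul_pos (mul_pos hσ0 h1t) h1t, sq_nonneg ‖bp‖]
end

section
/- For every p ∈ (0,1), the series ∑_{t=1}^∞ ((t+1)^p − t^p)² / t^(2p) converges and its sum is at most 2. -/
/-!
Bernoulli's inequality `(1 + 1/x)^p ≤ 1 + p/x` for `p ∈ [0, 1]` bounds the relative increment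
`((x+1)^p - x^p) / x^p` by `p / x ≤ 1 / x`, so the `t`-th term is at most `1 / t^2`,
and `∑ 1/t^2 = π^2/6 < 2`.
-/

open Real

lemma rpow_add_one_sub_rpow_le {p x : ℝ} (hp0 : 0 ≤ p) (hp1 : p ≤ 1) (hx : 0 < x) :
    (x + 1) ^ p - x ^ p ≤ p * x ^ p / x := by
  have hbern : (1 + x⁻¹) ^ p ≤ 1 + p * x⁻¹ :=
    rpow_one_add_le_one_add_mul_self (by linarith [inv_pos.mpr hx]) hp0 hp1
  have hsplit : (x + 1) ^ p = x ^ p * (1 + x⁻¹) ^ p := by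
    rw [← mul_rpow hx.le (by positivity), mul_add, mul_inv_cancel₀ hx.ne', mul_one]
  calc (x + 1) ^ p - x ^ p
      ≤ x ^ p * (1 + p * x⁻¹) - x ^ p := by
        rw [hsplit]; gcongr
    _ = p * x ^ p / x := by ring

lemma sq_rpow_add_one_sub_rpow_div_le {p x : ℝ} (hp0 : 0 ≤ p) (hp1 : p ≤ 1) (hx : 0 < x) :
    ((x + 1) ^ p - x ^ p) ^ 2 / x ^ (2 * p) ≤ 1 / x ^ 2 := by
  have hxp : 0 < x ^ p := rpow_pos_of_pos hx p
  have hnonneg : 0 ≤ (x + 1) ^ p - x ^ p :=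
    sub_nonneg.mpr (rpow_le_rpow hx.le (by linarith) hp0)
  have hle : (x + 1) ^ p - x ^ p ≤ x ^ p / x :=
    (rpow_add_one_sub_rpow_le hp0 hp1 hx).trans
      (div_le_div_of_nonneg_right (mul_le_of_le_one_left hxp.le hp1) hx.le)
  calc ((x + 1) ^ p - x ^ p) ^ 2 / x ^ (2 * p)
      = ((x + 1) ^ p - x ^ p) ^ 2 / (x ^ p) ^ 2 := by
        rw [mul_comm, rpow_mul hx.le, rpow_two]
    _ ≤ (x ^ p / x) ^ 2 / (x ^ p) ^ 2 := by gcongr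
    _ = 1 / x ^ 2 := by field_simp

lemma hasSum_one_div_nat_add_one_sq :
    HasSum (fun t : ℕ => 1 / ((t : ℝ) + 1) ^ 2) (π ^ 2 / 6) := by
  simpa using (hasSum_nat_add_iff' 1).mpr hasSum_zeta_two

lemma pi_sq_div_six_le_two : π ^ 2 / 6 ≤ 2 := by
  nlinarith [pi_pos, pi_lt_d2]

theorem stmt_4 (p : ℝ) (hp0 : 0 < p) (hp1 : p < 1) :
    Summable (fun t : ℕ =>
      ((((t : ℝ) + 1) + 1) ^ p - ((t : ℝ) + 1) ^ p)^2 / ((t : ℝ) + 1) ^ (2 * p)) ∧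
    (∑' t : ℕ,
      ((((t : ℝ) + 1) + 1) ^ p - ((t : ℝ) + 1) ^ p)^2 / ((t : ℝ) + 1) ^ (2 * p)) ≤ 2 := by
  have hle (t : ℕ) :=
    sq_rpow_add_one_sub_rpow_div_le hp0.le hp1.le (x := (t : ℝ) + 1) (by positivity)
  have hsummable := hasSum_one_div_nat_add_one_sq.summable.of_nonneg_of_le
    (fun t => by positivity) hle
  refine ⟨hsummable, ?_⟩
  calc _ ≤ ∑' t : ℕ, 1 / ((t : ℝ) + 1) ^ 2 :=
        hsummable.tsum_le_tsum hle hasSum_one_div_nat_add_one_sq.summable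
    _ = π ^ 2 / 6 := hasSum_one_div_nat_add_one_sq.tsum_eq
    _ ≤ 2 := pi_sq_div_six_le_two
end

section
/- Let h : ℝᵈ → ℝ be convex and C_h-Lipschitz continuous, and for μ > 0 define its Moreau envelope h(u;μ) = min_v h(v) + (1/(2μ))‖v−u‖². Then for any fixed u and any 0 < μ₂ < μ₁, 0 ≤ (h(u;μ₂) − h(u;μ₁))/(μ₁ − μ₂) ≤ (1/2)C_h². -/
/-- The Moreau envelope of `h` with parameter `μ`. -/
noncomputable def moreauEnv {d : ℕ} (h : EuclideanSpace ℝ (Fin d) → ℝ) (μ : ℝ)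
    (u : EuclideanSpace ℝ (Fin d)) : ℝ :=
  ⨅ v : EuclideanSpace ℝ (Fin d), (h v + (1 / (2 * μ)) * ‖v - u‖^2)

theorem stmt_9 (d : ℕ) (h : EuclideanSpace ℝ (Fin d) → ℝ) (Ch : ℝ)
    (hconv : ConvexOn ℝ Set.univ h)
    (hlip : ∀ x y, |h x - h y| ≤ Ch * ‖x - y‖)
    (u : EuclideanSpace ℝ (Fin d)) (μ₁ μ₂ : ℝ) (hμ2 : 0 < μ₂) (hμ12 : μ₂ < μ₁) :
    0 ≤ (moreauEnv h μ₂ u - moreauEnv h μ₁ u) / (μ₁ - μ₂) ∧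
      (moreauEnv h μ₂ u - moreauEnv h μ₁ u) / (μ₁ - μ₂) ≤ (1/2) * Ch^2 := by
  have hμ1 : (0:ℝ) < μ₁ := hμ2.trans hμ12
  set θ : ℝ := μ₂ / μ₁ with hθ
  have hθ0 : 0 < θ := div_pos hμ2 hμ1
  have hθ1 : θ < 1 := (div_lt_one hμ1).2 hμ12
  -- uniform lower bound on the objective
  have key : ∀ μ : ℝ, 0 < μ → ∀ v, h u - Ch^2*μ/2 ≤ h v + (1/(2*μ))*‖v-u‖^2 := by
    intro μ hμ v
    have h1 : h u - h v ≤ Ch * ‖u - v‖ := le_of_abs_le (hlip u v)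
    have h2 : ‖u - v‖ = ‖v - u‖ := norm_sub_rev u v
    have hμ' : (0:ℝ) < 2*μ := by linarith
    have h4 : (Ch*‖v-u‖ - Ch^2*μ/2) * (2*μ) ≤ ‖v-u‖^2 := by
      nlinarith [sq_nonneg (‖v-u‖ - Ch*μ)]
    have h5 : Ch*‖v-u‖ - Ch^2*μ/2 ≤ (1/(2*μ))*‖v-u‖^2 := by
      rw [div_mul_eq_mul_div, one_mul, le_div_iff₀ hμ']
      exact h4
    rw [h2] at h1
    linarith
  have bdd : ∀ μ : ℝ, 0 < μ →
      BddBelow (Set.range fun v : EuclideanSpace ℝ (Fin d) =>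
        h v + (1/(2*μ))*‖v-u‖^2) := by
    intro μ hμ
    exact ⟨h u - Ch^2*μ/2, by rintro x ⟨v, rfl⟩; exact key μ hμ v⟩
  -- monotonicity: envelope at μ₁ is smaller
  have hmono : moreauEnv h μ₁ u ≤ moreauEnv h μ₂ u := by
    apply ciInf_mono (bdd μ₁ hμ1)
    intro v
    have hle : (1:ℝ)/(2*μ₁) ≤ 1/(2*μ₂) := by
      apply one_div_le_one_div_of_le (by linarith) (by linarith)
    have := mul_le_mul_of_nonneg_right hle (sq_nonneg ‖v-u‖)
    linarith
  have hD : h u - Ch^2*μ₁/2 ≤ moreauEnv h μ₁ u := le_ciInf (key μ₁ hμ1)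
  -- the convexity-interpolation step
  have step : ∀ v, moreauEnv h μ₂ u ≤ (1-θ)*h u + θ*(h v + (1/(2*μ₁))*‖v-u‖^2) := by
    intro v
    set w : EuclideanSpace ℝ (Fin d) := u + θ • (v - u) with hwdef
    have hcw : h w ≤ (1-θ)*h u + θ*h v := by
      have hc := hconv.2 (Set.mem_univ u) (Set.mem_univ v)
        (by linarith : (0:ℝ) ≤ 1-θ) hθ0.le (by ring : (1-θ)+θ = 1)
      have hw : (1-θ)•u + θ•v = w := by
        rw [hwdef]; module
      rw [hw] at hc
      simpa [smul_eq_mul] using hc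
    have hnw : ‖w - u‖ = θ * ‖v - u‖ := by
      have e : w - u = θ • (v - u) := by rw [hwdef]; abel
      rw [e, norm_smul, Real.norm_eq_abs, abs_of_pos hθ0]
    have hcoef : (1/(2*μ₂))*θ^2 = θ*(1/(2*μ₁)) := by
      rw [hθ]; field_simp
    calc moreauEnv h μ₂ u ≤ h w + (1/(2*μ₂))*‖w-u‖^2 := ciInf_le (bdd μ₂ hμ2) w
      _ = h w + θ*((1/(2*μ₁))*‖v-u‖^2) := by
          rw [hnw, mul_pow]; linear_combination ‖v-u‖^2 * hcoef
      _ ≤ (1-θ)*h u + θ*h v + θ*((1/(2*μ₁))*‖v-u‖^2) := by linarith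
      _ = (1-θ)*h u + θ*(h v + (1/(2*μ₁))*‖v-u‖^2) := by ring
  have hup : moreauEnv h μ₂ u ≤ (1-θ)*h u + θ * moreauEnv h μ₁ u := by
    have hq : (moreauEnv h μ₂ u - (1-θ)*h u)/θ ≤ moreauEnv h μ₁ u := by
      apply le_ciInf
      intro v
      rw [div_le_iff₀ hθ0]
      have := step v
      nlinarith
    rw [div_le_iff₀ hθ0] at hq
    nlinarith
  constructor
  · apply div_nonneg (by linarith) (by linarith)
  · rw [div_le_iff₀ (by linarith : (0:ℝ) < μ₁ - μ₂)]
    have prodfact : (1-θ)*(h u - moreauEnv h μ₁ u) ≤ (1-θ)*(Ch^2*μ₁/2) :=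
      mul_le_mul_of_nonneg_left (by linarith) (by linarith)
    have e2 : (1-θ)*(Ch^2*μ₁/2) = (1/2)*Ch^2*(μ₁-μ₂) := by
      rw [hθ]; field_simp
    nlinarith
end

section
/- Let h : ℝᵈ → ℝ be convex and C_h-Lipschitz with Moreau envelope h(·;μ). Given constants c ∈ ℝᵈ, μ > 0, ρ > 0, let x̄ = argmin_x h(x;μ) + (ρ/2)‖x−c‖². Then x̄ = (μ/(1+μρ))·((1/μ)x̆ + ρc), where x̆ = argmin_v h(v) + (1/2)·(ρ/(1+μρ))‖v−c‖². -/
theorem min_div_two_mul_norm_add_sq_le {E : Type*} [SeminormedAddCommGroup E] {a b : ℝ}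
    (ha : 0 ≤ a) (hb : 0 ≤ b) (p q : E) :
    min a b / 2 * ‖p + q‖ ^ 2 ≤ a * ‖p‖ ^ 2 + b * ‖q‖ ^ 2 := by
  have hsq : ‖p + q‖ ^ 2 ≤ 2 * ‖p‖ ^ 2 + 2 * ‖q‖ ^ 2 := by
    nlinarith [norm_add_le p q, norm_nonneg (p + q), sq_nonneg (‖p‖ - ‖q‖)]
  have hmin : 0 ≤ min a b := le_min ha hb
  nlinarith [min_le_left a b, min_le_right a b, sq_nonneg ‖p‖, sq_nonneg ‖q‖]

section InnerProductSpace

variable {E : Type*} [NormedAddCommGroup E] [InnerProductSpace ℝ E]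

theorem moreau_quadratic_split {μ ρ : ℝ} (hμ : μ ≠ 0) (hμρ : 1 + μ * ρ ≠ 0) (c x v : E) :
    1 / (2 * μ) * ‖v - x‖ ^ 2 + ρ / 2 * ‖x - c‖ ^ 2 =
      1 / 2 * (ρ / (1 + μ * ρ)) * ‖v - c‖ ^ 2 +
        (1 / μ + ρ) / 2 * ‖x - (μ / (1 + μ * ρ)) • ((1 / μ) • v + ρ • c)‖ ^ 2 := by
  have hvx : v - x = (v - c) - (x - c) := by abel
  have hxP : x - (μ / (1 + μ * ρ)) • ((1 / μ) • v + ρ • c) =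
      (x - c) - (1 + μ * ρ)⁻¹ • (v - c) := by
    match_scalars <;> field_simp; ring
  rw [hvx, hxP, norm_sub_sq_real, norm_sub_sq_real (x - c), real_inner_smul_right, norm_smul,
    Real.norm_eq_abs, mul_pow, sq_abs, real_inner_comm (v - c)]
  field_simp
  ring

theorem norm_midpoint_sub_sq (c v w : E) :
    ‖((1 / 2 : ℝ) • v + (1 / 2 : ℝ) • w) - c‖ ^ 2 =
      1 / 2 * ‖v - c‖ ^ 2 + 1 / 2 * ‖w - c‖ ^ 2 - 1 / 4 * ‖v - w‖ ^ 2 := by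
  have hmid : ((1 / 2 : ℝ) • v + (1 / 2 : ℝ) • w) - c = (1 / 2 : ℝ) • ((v - c) + (w - c)) := by
    match_scalars <;> ring
  have hvw : v - w = (v - c) - (w - c) := by abel
  rw [hmid, hvw]
  generalize v - c = a
  generalize w - c = b
  rw [norm_smul, Real.norm_eq_abs, mul_pow, sq_abs, norm_add_sq_real, norm_sub_sq_real]
  ring

theorem ConvexOn.quadratic_growth_add_sq_norm_sub {h : E → ℝ} (hconv : ConvexOn ℝ Set.univ h)
    {κ : ℝ} {c x₀ : E}
    (hmin : ∀ v, h x₀ + 1 / 2 * κ * ‖x₀ - c‖ ^ 2 ≤ h v + 1 / 2 * κ * ‖v - c‖ ^ 2) (v : E) :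
    h x₀ + 1 / 2 * κ * ‖x₀ - c‖ ^ 2 + κ / 4 * ‖v - x₀‖ ^ 2 ≤ h v + 1 / 2 * κ * ‖v - c‖ ^ 2 := by
  have hmid := hconv.2 (Set.mem_univ v) (Set.mem_univ x₀) (by norm_num : (0 : ℝ) ≤ 1 / 2)
    (by norm_num : (0 : ℝ) ≤ 1 / 2) (by norm_num : (1 / 2 : ℝ) + 1 / 2 = 1)
  rw [smul_eq_mul, smul_eq_mul] at hmid
  have := hmin ((1 / 2 : ℝ) • v + (1 / 2 : ℝ) • x₀)
  rw [norm_midpoint_sub_sq] at this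
  linarith

end InnerProductSpace

section MoreauEnvelope

variable {d : ℕ} {h : EuclideanSpace ℝ (Fin d) → ℝ} {μ ρ : ℝ} {c x₀ : EuclideanSpace ℝ (Fin d)}

theorem bddBelow_moreau_objective (hμ : 0 < μ) (hρ : 0 < ρ)
    (hmin : ∀ v, h x₀ + 1 / 2 * (ρ / (1 + μ * ρ)) * ‖x₀ - c‖ ^ 2 ≤
      h v + 1 / 2 * (ρ / (1 + μ * ρ)) * ‖v - c‖ ^ 2) (u : EuclideanSpace ℝ (Fin d)) :
    BddBelow (Set.range fun v => h v + 1 / (2 * μ) * ‖v - u‖ ^ 2) := by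
  refine ⟨h x₀ + 1 / 2 * (ρ / (1 + μ * ρ)) * ‖x₀ - c‖ ^ 2 - ρ / 2 * ‖u - c‖ ^ 2, ?_⟩
  rintro _ ⟨v, rfl⟩
  dsimp only
  have hsplit := moreau_quadratic_split hμ.ne' (by positivity : 1 + μ * ρ ≠ 0) c u v
  have hsq : 0 ≤ (1 / μ + ρ) / 2 *
      ‖u - (μ / (1 + μ * ρ)) • ((1 / μ) • v + ρ • c)‖ ^ 2 := by positivity
  linarith [hmin v]

theorem moreauEnv_add_sq_le (hμ : 0 < μ) (hρ : 0 < ρ)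
    (hmin : ∀ v, h x₀ + 1 / 2 * (ρ / (1 + μ * ρ)) * ‖x₀ - c‖ ^ 2 ≤
      h v + 1 / 2 * (ρ / (1 + μ * ρ)) * ‖v - c‖ ^ 2) :
    moreauEnv h μ ((μ / (1 + μ * ρ)) • ((1 / μ) • x₀ + ρ • c)) +
        ρ / 2 * ‖(μ / (1 + μ * ρ)) • ((1 / μ) • x₀ + ρ • c) - c‖ ^ 2 ≤
      h x₀ + 1 / 2 * (ρ / (1 + μ * ρ)) * ‖x₀ - c‖ ^ 2 := by
  set P := (μ / (1 + μ * ρ)) • ((1 / μ) • x₀ + ρ • c)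
  have hle : moreauEnv h μ P ≤ h x₀ + 1 / (2 * μ) * ‖x₀ - P‖ ^ 2 :=
    ciInf_le (bddBelow_moreau_objective hμ hρ hmin P) x₀
  have hsplit := moreau_quadratic_split hμ.ne' (by positivity : 1 + μ * ρ ≠ 0) c P x₀
  rw [sub_self, norm_zero] at hsplit
  linarith

theorem exists_quadratic_growth_moreauEnv_add_sq (hconv : ConvexOn ℝ Set.univ h)
    (hμ : 0 < μ) (hρ : 0 < ρ)
    (hmin : ∀ v, h x₀ + 1 / 2 * (ρ / (1 + μ * ρ)) * ‖x₀ - c‖ ^ 2 ≤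
      h v + 1 / 2 * (ρ / (1 + μ * ρ)) * ‖v - c‖ ^ 2) :
    ∃ β > 0, ∀ x, h x₀ + 1 / 2 * (ρ / (1 + μ * ρ)) * ‖x₀ - c‖ ^ 2 +
        β * ‖x - (μ / (1 + μ * ρ)) • ((1 / μ) • x₀ + ρ • c)‖ ^ 2 ≤
      moreauEnv h μ x + ρ / 2 * ‖x - c‖ ^ 2 := by
  set P := fun v : EuclideanSpace ℝ (Fin d) => (μ / (1 + μ * ρ)) • ((1 / μ) • v + ρ • c)
  have hμρ : 0 < 1 + μ * ρ := by positivity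
  refine ⟨min ((1 / μ + ρ) / 2) (ρ * (1 + μ * ρ) / 4) / 2, by positivity, fun x => ?_⟩
  suffices key : ∀ v, h x₀ + 1 / 2 * (ρ / (1 + μ * ρ)) * ‖x₀ - c‖ ^ 2 +
      min ((1 / μ + ρ) / 2) (ρ * (1 + μ * ρ) / 4) / 2 * ‖x - P x₀‖ ^ 2 - ρ / 2 * ‖x - c‖ ^ 2 ≤
        h v + 1 / (2 * μ) * ‖v - x‖ ^ 2 by
    have : _ ≤ moreauEnv h μ x := le_ciInf key
    linarith
  intro v
  have hsplit := moreau_quadratic_split hμ.ne' hμρ.ne' c x v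
  have hgrowth := hconv.quadratic_growth_add_sq_norm_sub hmin v
  have hPv : P v - P x₀ = (1 + μ * ρ)⁻¹ • (v - x₀) := by
    simp only [P]
    match_scalars <;> field_simp; ring
  have hPnorm : ρ * (1 + μ * ρ) / 4 * ‖P v - P x₀‖ ^ 2 = ρ / (1 + μ * ρ) / 4 * ‖v - x₀‖ ^ 2 := by
    rw [hPv, norm_smul, Real.norm_eq_abs, abs_of_pos (inv_pos.mpr hμρ), mul_pow]
    field_simp
  have hsum := min_div_two_mul_norm_add_sq_le (by positivity : 0 ≤ (1 / μ + ρ) / 2)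
    (by positivity : 0 ≤ ρ * (1 + μ * ρ) / 4) (x - P v) (P v - P x₀)
  rw [sub_add_sub_cancel] at hsum
  linarith

end MoreauEnvelope

theorem stmt_11_general (d : ℕ) (h : EuclideanSpace ℝ (Fin d) → ℝ)
    (hconv : ConvexOn ℝ Set.univ h)
    (c : EuclideanSpace ℝ (Fin d)) (μ ρ : ℝ) (hμ : 0 < μ) (hρ : 0 < ρ)
    (xbar xbreve : EuclideanSpace ℝ (Fin d))
    (hxbar : ∀ x, moreauEnv h μ xbar + (ρ/2) * ‖xbar - c‖^2 ≤
      moreauEnv h μ x + (ρ/2) * ‖x - c‖^2)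
    (hxbreve : ∀ v, h xbreve + (1/2) * (ρ / (1 + μ * ρ)) * ‖xbreve - c‖^2 ≤
      h v + (1/2) * (ρ / (1 + μ * ρ)) * ‖v - c‖^2) :
    xbar = (μ / (1 + μ * ρ)) • ((1/μ) • xbreve + ρ • c) := by
  obtain ⟨β, hβ, hgrowth⟩ := exists_quadratic_growth_moreauEnv_add_sq hconv hμ hρ hxbreve
  have hupper := moreauEnv_add_sq_le hμ hρ hxbreve
  have hβdist : β * ‖xbar - (μ / (1 + μ * ρ)) • ((1/μ) • xbreve + ρ • c)‖ ^ 2 ≤ 0 := by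
    linarith [hgrowth xbar, hxbar ((μ / (1 + μ * ρ)) • ((1/μ) • xbreve + ρ • c))]
  rw [← sub_eq_zero, ← norm_eq_zero, ← sq_eq_zero_iff]
  exact le_antisymm (nonpos_of_mul_nonpos_right hβdist hβ) (sq_nonneg _)

theorem stmt_11 (d : ℕ) (h : EuclideanSpace ℝ (Fin d) → ℝ) (Ch : ℝ)
    (hconv : ConvexOn ℝ Set.univ h)
    (hlip : ∀ x y, |h x - h y| ≤ Ch * ‖x - y‖)
    (c : EuclideanSpace ℝ (Fin d)) (μ ρ : ℝ) (hμ : 0 < μ) (hρ : 0 < ρ)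
    (xbar xbreve : EuclideanSpace ℝ (Fin d))
    (hxbar : ∀ x, moreauEnv h μ xbar + (ρ/2) * ‖xbar - c‖^2 ≤
      moreauEnv h μ x + (ρ/2) * ‖x - c‖^2)
    (hxbreve : ∀ v, h xbreve + (1/2) * (ρ / (1 + μ * ρ)) * ‖xbreve - c‖^2 ≤
      h v + (1/2) * (ρ / (1 + μ * ρ)) * ‖v - c‖^2) :
    xbar = (μ / (1 + μ * ρ)) • ((1/μ) • xbreve + ρ • c) :=
  stmt_11_general d h hconv c μ ρ hμ hρ xbar xbreve hxbar hxbreve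
end

section
/- Let β^t = β⁰(1 + ξ t^p) with β⁰ > 0, ξ ∈ (0,1), p ∈ (0,1), and let μ^t = c/β^t for a constant c > 0. Then ∑_{t=1}^∞ (μ^{t−1}/μ^t − 1)² ≤ 3. -/
open Real

theorem stmt_14 (β0 ξ p c : ℝ) (hβ0 : 0 < β0) (hξ0 : 0 < ξ) (hξ1 : ξ < 1)
    (hp0 : 0 < p) (hp1 : p < 1) (hc : 0 < c)
    (β μ : ℕ → ℝ) (hβ : ∀ t : ℕ, β t = β0 * (1 + ξ * (t : ℝ) ^ p))
    (hμ : ∀ t : ℕ, μ t = c / β t) :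
    Summable (fun t : ℕ => (μ t / μ (t + 1) - 1)^2) ∧
      (∑' t : ℕ, (μ t / μ (t + 1) - 1)^2) ≤ 3 := by
  have hden : ∀ t : ℕ, (0:ℝ) < 1 + ξ * (t : ℝ) ^ p := by
    intro t
    have : (0:ℝ) ≤ (t:ℝ) ^ p := Real.rpow_nonneg (Nat.cast_nonneg t) p
    nlinarith
  have hβpos : ∀ t : ℕ, 0 < β t := by
    intro t; rw [hβ t]; exact mul_pos hβ0 (hden t)
  have hratio : ∀ t : ℕ, μ t / μ (t + 1) - 1 =
      ξ * (((t:ℝ) + 1) ^ p - (t:ℝ) ^ p) / (1 + ξ * (t:ℝ) ^ p) := by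
    intro t
    have h1 := hden t
    have h2 := hden (t + 1)
    rw [hμ t, hμ (t+1), hβ t, hβ (t+1)]
    push_cast at h2 ⊢
    field_simp
    ring
  -- value at 0
  have h0 : (μ 0 / μ 1 - 1)^2 = ξ^2 := by
    have := hratio 0
    simp only [Nat.cast_zero, zero_add] at this
    rw [this, Real.zero_rpow hp0.ne', Real.one_rpow]
    norm_num
  -- bound for t ≥ 1
  have hb : ∀ n : ℕ, (μ (n+1) / μ (n+1+1) - 1)^2 ≤ 1 / ((n:ℝ) + 1)^2 := by
    intro n
    set x : ℝ := (n:ℝ) + 1 with hxdef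
    have hx1 : (1:ℝ) ≤ x := by simp [hxdef]
    have hx0 : (0:ℝ) < x := lt_of_lt_of_le one_pos hx1
    have hxp : (0:ℝ) < x ^ p := Real.rpow_pos_of_pos hx0 p
    have hcast : ((n+1 : ℕ) : ℝ) = x := by push_cast [hxdef]; ring
    have hr : μ (n+1) / μ (n+1+1) - 1 = ξ * ((x + 1) ^ p - x ^ p) / (1 + ξ * x ^ p) := by
      have := hratio (n+1)
      rwa [hcast] at this
    have hdpos : (0:ℝ) < 1 + ξ * x ^ p := by nlinarith
    have hΔ0 : (0:ℝ) ≤ (x + 1) ^ p - x ^ p := by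
      have := Real.rpow_le_rpow hx0.le (by linarith : x ≤ x + 1) hp0.le
      linarith
    have hΔ : (x + 1) ^ p - x ^ p ≤ x ^ p * (p / x) := by
      have hsplit : (x + 1) ^ p = x ^ p * (1 + 1/x) ^ p := by
        have h1x : (0:ℝ) < 1/x := one_div_pos.mpr hx0
        rw [← Real.mul_rpow hx0.le (by linarith)]
        congr 1
        field_simp
      have hbern : (1 + 1/x) ^ p ≤ 1 + p * (1/x) :=
        rpow_one_add_le_one_add_mul_self (by have := one_div_pos.mpr hx0; linarith) hp0.le hp1.le
      calc (x + 1) ^ p - x ^ p = x ^ p * ((1 + 1/x) ^ p - 1) := by rw [hsplit]; ring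
        _ ≤ x ^ p * (p * (1/x)) := by
            apply mul_le_mul_of_nonneg_left _ hxp.le
            linarith
        _ = x ^ p * (p / x) := by ring
    have hA0 : 0 ≤ ξ * ((x + 1) ^ p - x ^ p) / (1 + ξ * x ^ p) := by positivity
    have hA : ξ * ((x + 1) ^ p - x ^ p) / (1 + ξ * x ^ p) ≤ 1 / x := by
      have step : ξ * ((x + 1) ^ p - x ^ p) / (1 + ξ * x ^ p)
          ≤ (ξ * (x ^ p * (p / x))) / (ξ * x ^ p) := by
        apply div_le_div₀ (by positivity)
          (mul_le_mul_of_nonneg_left hΔ hξ0.le) (by positivity)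
        nlinarith
      have heq : (ξ * (x ^ p * (p / x))) / (ξ * x ^ p) = p / x := by
        field_simp
      calc ξ * ((x + 1) ^ p - x ^ p) / (1 + ξ * x ^ p) ≤ p / x := by rw [← heq]; exact step
        _ ≤ 1 / x := by gcongr
    rw [hr]
    calc (ξ * ((x + 1) ^ p - x ^ p) / (1 + ξ * x ^ p))^2 ≤ (1/x)^2 := by
          exact pow_le_pow_left₀ hA0 hA 2
      _ = 1 / x^2 := by rw [div_pow, one_pow]
  -- summability of comparison series
  have hzsum : Summable (fun n : ℕ => (1:ℝ) / (n:ℝ) ^ 2) := hasSum_zeta_two.summable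
  have hs1 : Summable (fun n : ℕ => (1:ℝ) / ((n:ℝ) + 1) ^ 2) := by
    have h2 := (summable_nat_add_iff 1).mpr hzsum
    simpa using h2
  have hts1 : ∑' n : ℕ, (1:ℝ) / ((n:ℝ) + 1) ^ 2 ≤ 2 := by
    have hz := hasSum_zeta_two.tsum_eq
    have hsplit := Summable.tsum_eq_zero_add hzsum
    simp only [Nat.cast_zero, Nat.cast_add, Nat.cast_one] at hsplit
    norm_num at hsplit
    have hpi : π ^ 2 / 6 ≤ 2 := by nlinarith [Real.pi_lt_d2, Real.pi_pos]
    simp only [one_div] at hz ⊢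
    rw [← hsplit, hz]
    exact hpi
  have hsum_shift : Summable (fun n : ℕ => (μ (n+1) / μ (n+1+1) - 1)^2) :=
    Summable.of_nonneg_of_le (fun n => sq_nonneg _) hb hs1
  have hsum : Summable (fun t : ℕ => (μ t / μ (t + 1) - 1)^2) :=
    (summable_nat_add_iff 1).mp hsum_shift
  refine ⟨hsum, ?_⟩
  have hsplit := Summable.tsum_eq_zero_add hsum
  rw [hsplit, h0]
  have htail : ∑' n : ℕ, (μ (n+1) / μ (n+1+1) - 1)^2 ≤ ∑' n : ℕ, (1:ℝ) / ((n:ℝ) + 1) ^ 2 :=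
    Summable.tsum_le_tsum hb hsum_shift hs1
  nlinarith [htail.trans hts1, sq_nonneg ξ]
end

section
/- Let β^t = β⁰(1 + ξ t^p) with β⁰ > 0, ξ ∈ (0,1), p ∈ (0,1). Then ∑_{t=1}^∞ (1 − √(β^t/β^{t+1}))² ≤ 1/2. -/
open Real

/-- Telescoping sum: ∑ 1/(2(n+1)(n+2)) = 1/2. -/
lemma telescope_hasSum :
    HasSum (fun n : ℕ => 1 / (2 * ((n : ℝ) + 1) * ((n : ℝ) + 2))) (1/2) := by
  have hnn : ∀ n : ℕ, 0 ≤ 1 / (2 * ((n : ℝ) + 1) * ((n : ℝ) + 2)) := by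
    intro n; positivity
  rw [hasSum_iff_tendsto_nat_of_nonneg hnn]
  have key : ∀ n : ℕ, ∑ i ∈ Finset.range n, 1 / (2 * ((i : ℝ) + 1) * ((i : ℝ) + 2))
      = 1/2 - 1 / (2 * ((n : ℝ) + 1)) := by
    intro n
    induction n with
    | zero => simp
    | succ k ih =>
      rw [Finset.sum_range_succ, ih]
      push_cast
      have h1 : (k : ℝ) + 1 ≠ 0 := by positivity
      have h2 : (k : ℝ) + 2 ≠ 0 := by positivity
      field_simp
      ring
  simp only [key]
  have h : Filter.Tendsto (fun n : ℕ => 1 / (2 * ((n : ℝ) + 1))) Filter.atTop (nhds 0) := by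
    simp only [one_div]
    apply Filter.Tendsto.comp tendsto_inv_atTop_zero
    apply Filter.Tendsto.const_mul_atTop two_pos
    exact Filter.tendsto_atTop_add_const_right _ 1 tendsto_natCast_atTop_atTop
  have := (tendsto_const_nhds (x := (1:ℝ)/2)).sub h
  simpa using this

set_option maxHeartbeats 1000000 in
theorem stmt_15 (β0 ξ p : ℝ) (hβ0 : 0 < β0) (hξ0 : 0 < ξ) (hξ1 : ξ < 1)
    (hp0 : 0 < p) (hp1 : p < 1)
    (β : ℕ → ℝ) (hβ : ∀ t : ℕ, β t = β0 * (1 + ξ * (t : ℝ) ^ p)) :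
    Summable (fun t : ℕ => (1 - Real.sqrt (β (t + 1) / β (t + 2)))^2) ∧
      (∑' t : ℕ, (1 - Real.sqrt (β (t + 1) / β (t + 2)))^2) ≤ 1/2 := by
  have hle : ∀ t : ℕ, (1 - Real.sqrt (β (t + 1) / β (t + 2)))^2
      ≤ 1 / (2 * ((t : ℝ) + 1) * ((t : ℝ) + 2)) := by
    intro t
    set s : ℝ := (t : ℝ) + 1 with hs_def
    clear_value s
    have hs1 : 1 ≤ s := by
      have h0 : (0:ℝ) ≤ (t:ℝ) := Nat.cast_nonneg t
      rw [hs_def]; linarith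
    have hsp : 0 < s := lt_of_lt_of_le one_pos hs1
    set A : ℝ := 1 + ξ * s ^ p with hA_def
    set B : ℝ := 1 + ξ * (s + 1) ^ p with hB_def
    clear_value A B
    have hspow : (0:ℝ) < s ^ p := Real.rpow_pos_of_pos hsp p
    have hApos : 0 < A := by
      have := mul_pos hξ0 hspow; rw [hA_def]; linarith
    have hAB : A ≤ B := by
      have h := Real.rpow_le_rpow (le_of_lt hsp) (by linarith : s ≤ s + 1) hp0.le
      have h2 := mul_le_mul_of_nonneg_left h hξ0.le
      rw [hA_def, hB_def]; linarith
    have hBpos : 0 < B := lt_of_lt_of_le hApos hAB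
    have hratio : β (t + 1) / β (t + 2) = A / B := by
      rw [hβ (t+1), hβ (t+2)]
      have e1 : ((t + 1 : ℕ) : ℝ) = s := by rw [hs_def]; push_cast; ring
      have e2 : ((t + 2 : ℕ) : ℝ) = s + 1 := by rw [hs_def]; push_cast; ring
      rw [e1, e2, mul_div_mul_left _ _ (ne_of_gt hβ0), hA_def, hB_def]
    -- Bernoulli: (s+1)^p ≤ s^p + p * s^(p-1)
    have hBern : (s + 1) ^ p ≤ s ^ p + p * s ^ (p - 1) := by
      have h0 : s + 1 = s * (1 + 1/s) := by field_simp
      have h1 : (s + 1) ^ p = s ^ p * (1 + 1/s) ^ p := by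
        rw [h0, Real.mul_rpow hsp.le (by positivity)]
      have h2 : (1 + 1/s) ^ p ≤ 1 + p * (1/s) := by
        apply rpow_one_add_le_one_add_mul_self _ hp0.le hp1.le
        have : (0:ℝ) < 1/s := by positivity
        linarith
      have h3 : s ^ p * (1 + p * (1/s)) = s ^ p + p * s ^ (p - 1) := by
        rw [Real.rpow_sub hsp, Real.rpow_one]
        field_simp
      calc (s + 1) ^ p = s ^ p * (1 + 1/s) ^ p := h1
        _ ≤ s ^ p * (1 + p * (1/s)) := by
            apply mul_le_mul_of_nonneg_left h2 hspow.le
        _ = s ^ p + p * s ^ (p - 1) := h3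
    -- key: s * (B - A) ≤ A
    have hkey : s * (B - A) ≤ A := by
      have h1 : B - A = ξ * ((s + 1) ^ p - s ^ p) := by rw [hA_def, hB_def]; ring
      have h2 : s * s ^ (p - 1) = s ^ p := by
        have h := Real.rpow_one_add' hsp.le (show 1 + (p - 1) ≠ 0 by
          intro h; rw [show 1 + (p - 1) = p by ring] at h; exact hp0.ne' h)
        rw [show 1 + (p - 1) = p by ring] at h
        exact h.symm
      have h3 : s * (B - A) ≤ s * (ξ * (p * s ^ (p - 1))) := by
        rw [h1]
        apply mul_le_mul_of_nonneg_left _ hsp.le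
        apply mul_le_mul_of_nonneg_left _ hξ0.le
        linarith [hBern]
      have h4 : s * (ξ * (p * s ^ (p - 1))) = ξ * p * s ^ p := by
        rw [← h2]; ring
      have h5 : ξ * p * s ^ p ≤ ξ * s ^ p := by
        apply mul_le_mul_of_nonneg_right _ hspow.le
        nlinarith
      have h6 : ξ * s ^ p ≤ A := by rw [hA_def]; linarith
      linarith
    -- sqrt manipulations
    set a : ℝ := Real.sqrt A with ha_def
    set b : ℝ := Real.sqrt B with hb_def
    clear_value a b
    have ha2 : a ^ 2 = A := by rw [ha_def]; exact Real.sq_sqrt hApos.le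
    have hb2 : b ^ 2 = B := by rw [hb_def]; exact Real.sq_sqrt hBpos.le
    have hapos : 0 < a := by rw [ha_def]; exact Real.sqrt_pos.mpr hApos
    have hbpos : 0 < b := by rw [hb_def]; exact Real.sqrt_pos.mpr hBpos
    have hab : a ≤ b := by rw [ha_def, hb_def]; exact Real.sqrt_le_sqrt hAB
    have hsqrt : Real.sqrt (A / B) = a / b := by
      rw [ha_def, hb_def, Real.sqrt_div hApos.le]
    have hkey2 : s * (b ^ 2 - a ^ 2) ≤ a ^ 2 := by rw [ha2, hb2]; exact hkey
    have hmain : 2 * s * (b - a) ≤ b := by nlinarith [mul_pos hapos hbpos, sq_nonneg (a - b)]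
    have hub : 1 - a / b ≤ 1 / (2 * s) := by
      have e : 1 - a / b = (b - a) / b := by field_simp
      rw [e, div_le_div_iff₀ hbpos (by positivity : (0:ℝ) < 2 * s)]
      nlinarith
    have hlb : 0 ≤ 1 - a / b := by
      have : a / b ≤ 1 := div_le_one_of_le₀ hab hbpos.le
      linarith
    rw [hratio, hsqrt]
    have step1 : (1 - a / b) ^ 2 ≤ (1 / (2 * s)) ^ 2 := by
      apply pow_le_pow_left₀ hlb hub
    have step2 : (1 / (2 * s)) ^ 2 ≤ 1 / (2 * s * (s + 1)) := by
      rw [div_pow, one_pow, div_le_div_iff₀ (by positivity) (by positivity)]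
      nlinarith
    have e2 : ((t : ℝ) + 2) = s + 1 := by rw [hs_def]; ring
    rw [e2]
    exact le_trans step1 step2
  have hnn : ∀ t : ℕ, 0 ≤ (1 - Real.sqrt (β (t + 1) / β (t + 2)))^2 := fun t => sq_nonneg _
  have hsummable : Summable (fun t : ℕ => (1 - Real.sqrt (β (t + 1) / β (t + 2)))^2) :=
    Summable.of_nonneg_of_le hnn hle telescope_hasSum.summable
  refine ⟨hsummable, ?_⟩
  calc (∑' t : ℕ, (1 - Real.sqrt (β (t + 1) / β (t + 2)))^2)
      ≤ ∑' t : ℕ, 1 / (2 * ((t : ℝ) + 1) * ((t : ℝ) + 2)) :=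
        Summable.tsum_le_tsum hle hsummable telescope_hasSum.summable
    _ = 1/2 := telescope_hasSum.tsum_eq
end
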